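/- arXiv:2001.05184 — 5 statements merged into one kernel-verified Lean document; each statement's English description precedes it below -/
import Mathlib

section
/- For every τ ∈ ℂ with Im τ > 0 and all A, x ∈ ℂ, θ(A − 1/2 + x | τ)·θ(A + x | τ)·θ(2A − 1/2 | 2τ) = θ(A − 1/2 | τ)·θ(A | τ)·θ(2A + 2x − 1/2 | 2τ). In particular, whenever the denominators are nonzero, the quotient [θ(A − 1/2 + x | τ)θ(A + x | τ)] / [θ(A − 1/2 | τ)θ(A | τ)] equals θ(2A − 1/2 + 2x | 2τ) / θ(2A − 1/2 | 2τ). -/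
open Complex

private lemma summable_norm_theta_term {τ : ℂ} (hτ : 0 < τ.im) (z : ℂ) :
    Summable fun n : ℤ => ‖jacobiTheta₂_term n z τ‖ := by
  apply (summable_pow_mul_jacobiTheta₂_term_bound |z.im| hτ 0).of_nonneg_of_le
    (fun n => norm_nonneg _)
  intro n
  simpa only [pow_zero, one_mul] using norm_jacobiTheta₂_term_le hτ le_rfl le_rfl n

private lemma theta_term_even (τ u v : ℂ) (a b : ℤ) :
    jacobiTheta₂_term (a + b) u τ * jacobiTheta₂_term (a - b) v τ =
      jacobiTheta₂_term a (u + v) (2 * τ) * jacobiTheta₂_term b (u - v) (2 * τ) := by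
  simp only [jacobiTheta₂_term, ← Complex.exp_add]
  congr 1
  push_cast
  ring

private lemma theta_term_odd (τ u v : ℂ) (a b : ℤ) :
    jacobiTheta₂_term (a + b + 1) u τ * jacobiTheta₂_term (a - b) v τ =
      cexp (↑Real.pi * I * τ + 2 * ↑Real.pi * I * u) *
        (jacobiTheta₂_term a (u + v + τ) (2 * τ) * jacobiTheta₂_term b (u - v + τ) (2 * τ)) := by
  simp only [jacobiTheta₂_term, ← Complex.exp_add]
  congr 1
  push_cast
  ring

private lemma hasSum_theta_mul {τ : ℂ} (hτ : 0 < τ.im) (u v : ℂ) :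
    HasSum (fun p : ℤ × ℤ => jacobiTheta₂_term p.1 u τ * jacobiTheta₂_term p.2 v τ)
      (jacobiTheta₂ u τ * jacobiTheta₂ v τ) := by
  have hs := summable_mul_of_summable_norm (R := ℂ)
    (summable_norm_theta_term hτ u) (summable_norm_theta_term hτ v)
  have heq := tsum_mul_tsum_of_summable_norm (R := ℂ)
    (summable_norm_theta_term hτ u) (summable_norm_theta_term hτ v)
  rw [jacobiTheta₂, jacobiTheta₂, heq]
  exact hs.hasSum

/-- The key product formula:
`θ(u|τ)θ(v|τ) = θ(u+v|2τ)θ(u-v|2τ) + e^{πiτ+2πiu}θ(u+v+τ|2τ)θ(u-v+τ|2τ)`. -/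
private lemma theta_product_formula {τ : ℂ} (hτ : 0 < τ.im) (u v : ℂ) :
    jacobiTheta₂ u τ * jacobiTheta₂ v τ =
      jacobiTheta₂ (u + v) (2 * τ) * jacobiTheta₂ (u - v) (2 * τ) +
        cexp (↑Real.pi * I * τ + 2 * ↑Real.pi * I * u) *
          (jacobiTheta₂ (u + v + τ) (2 * τ) * jacobiTheta₂ (u - v + τ) (2 * τ)) := by
  have h2τ : 0 < (2 * τ).im := by
    have : (2 * τ).im = 2 * τ.im := by simp
    rw [this]; linarith
  set f : ℤ × ℤ → ℂ := fun p => jacobiTheta₂_term p.1 u τ * jacobiTheta₂_term p.2 v τ with hf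
  have hfull : HasSum f (jacobiTheta₂ u τ * jacobiTheta₂ v τ) := hasSum_theta_mul hτ u v
  set g₁ : ℤ × ℤ → ℤ × ℤ := fun p => (p.1 + p.2, p.1 - p.2) with hg₁
  set g₂ : ℤ × ℤ → ℤ × ℤ := fun p => (p.1 + p.2 + 1, p.1 - p.2) with hg₂
  have hinj₁ : Function.Injective g₁ := by
    intro p q h
    simp only [hg₁, Prod.mk.injEq] at h
    exact Prod.ext (by omega) (by omega)
  have hinj₂ : Function.Injective g₂ := by
    intro p q h
    simp only [hg₂, Prod.mk.injEq] at h
    exact Prod.ext (by omega) (by omega)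
  have hr₁ : Set.range g₁ = {p : ℤ × ℤ | Even (p.1 + p.2)} := by
    ext ⟨m, n⟩
    simp only [Set.mem_range, Set.mem_setOf_eq, hg₁, Prod.mk.injEq, Prod.exists, Int.even_iff]
    constructor
    · rintro ⟨a, b, h1, h2⟩
      omega
    · intro hc
      exact ⟨(m + n) / 2, m - (m + n) / 2, by omega, by omega⟩
  have hr₂ : Set.range g₂ = {p : ℤ × ℤ | Even (p.1 + p.2)}ᶜ := by
    ext ⟨m, n⟩
    simp only [Set.mem_range, Set.mem_compl_iff, Set.mem_setOf_eq, hg₂, Prod.mk.injEq,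
      Prod.exists, Int.even_iff]
    constructor
    · rintro ⟨a, b, h1, h2⟩
      omega
    · intro h
      exact ⟨(m + n - 1) / 2, m - (m + n - 1) / 2 - 1, by omega, by omega⟩
  have hcompl : IsCompl (Set.range g₁) (Set.range g₂) := by
    rw [hr₁, hr₂]
    exact isCompl_compl
  have heven : HasSum (f ∘ (↑) : Set.range g₁ → ℂ)
      (jacobiTheta₂ (u + v) (2 * τ) * jacobiTheta₂ (u - v) (2 * τ)) := by
    have h1 := hasSum_theta_mul h2τ (u + v) (u - v)
    have h2 : (f ∘ (↑)) ∘ (Equiv.ofInjective g₁ hinj₁) = fun p : ℤ × ℤ =>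
        jacobiTheta₂_term p.1 (u + v) (2 * τ) * jacobiTheta₂_term p.2 (u - v) (2 * τ) := by
      funext p
      simp only [Function.comp_apply, Equiv.ofInjective_apply, hf, hg₁]
      exact theta_term_even τ u v p.1 p.2
    rw [← Equiv.hasSum_iff (Equiv.ofInjective g₁ hinj₁), h2]
    exact h1
  have hodd : HasSum (f ∘ (↑) : Set.range g₂ → ℂ)
      (cexp (↑Real.pi * I * τ + 2 * ↑Real.pi * I * u) *
        (jacobiTheta₂ (u + v + τ) (2 * τ) * jacobiTheta₂ (u - v + τ) (2 * τ))) := by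
    have h1 := hasSum_theta_mul h2τ (u + v + τ) (u - v + τ)
    have h2 : (f ∘ (↑)) ∘ (Equiv.ofInjective g₂ hinj₂) = fun p : ℤ × ℤ =>
        cexp (↑Real.pi * I * τ + 2 * ↑Real.pi * I * u) *
          (jacobiTheta₂_term p.1 (u + v + τ) (2 * τ) *
            jacobiTheta₂_term p.2 (u - v + τ) (2 * τ)) := by
      funext p
      simp only [Function.comp_apply, Equiv.ofInjective_apply, hf, hg₂]
      exact theta_term_odd τ u v p.1 p.2
    rw [← Equiv.hasSum_iff (Equiv.ofInjective g₂ hinj₂), h2]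
    exact h1.mul_left _
  exact hfull.unique (heven.add_isCompl hcompl hodd)

/-- The theta function with doubled period vanishes at `τ - 1/2`. -/
private lemma theta_vanish {τ : ℂ} (hτ : 0 < τ.im) :
    jacobiTheta₂ (τ - 1 / 2) (2 * τ) = 0 := by
  have h2τ : 0 < (2 * τ).im := by
    have : (2 * τ).im = 2 * τ.im := by simp
    rw [this]; linarith
  have e : ℤ ≃ ℤ := Function.Involutive.toPerm (fun k => -1 - k) (fun k => by ring)
  have key : ∀ k : ℤ, jacobiTheta₂_term (-1 - k) (τ - 1 / 2) (2 * τ) =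
      -jacobiTheta₂_term k (τ - 1 / 2) (2 * τ) := by
    intro k
    simp only [jacobiTheta₂_term]
    have : (2 * ↑Real.pi * I * (↑(-1 - k) : ℂ) * (τ - 1 / 2) +
        ↑Real.pi * I * (↑(-1 - k) : ℂ) ^ 2 * (2 * τ)) =
        (2 * ↑Real.pi * I * (k : ℂ) * (τ - 1 / 2) + ↑Real.pi * I * (k : ℂ) ^ 2 * (2 * τ)) +
          (↑Real.pi * I + (k : ℂ) * (2 * ↑Real.pi * I)) := by
      push_cast
      ring
    rw [this]
    simp only [Complex.exp_add, Complex.exp_pi_mul_I, Complex.exp_int_mul_two_pi_mul_I]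
    ring
  have hsum := (hasSum_jacobiTheta₂_term (τ - 1 / 2) h2τ)
  have h1 : jacobiTheta₂ (τ - 1 / 2) (2 * τ) =
      ∑' k : ℤ, jacobiTheta₂_term (-1 - k) (τ - 1 / 2) (2 * τ) := by
    rw [jacobiTheta₂]
    exact ((Equiv.subLeft (-1 : ℤ)).tsum_eq
      (fun k => jacobiTheta₂_term k (τ - 1 / 2) (2 * τ))).symm
  have h2 : jacobiTheta₂ (τ - 1 / 2) (2 * τ) = -jacobiTheta₂ (τ - 1 / 2) (2 * τ) := by
    nth_rewrite 1 [h1]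
    simp_rw [key]
    rw [tsum_neg]
    rfl
  linear_combination h2 / 2

private lemma theta_half_product {τ : ℂ} (hτ : 0 < τ.im) (B y : ℂ) :
    jacobiTheta₂ (B - 1 / 2 + y) τ * jacobiTheta₂ (B + y) τ =
      jacobiTheta₂ (2 * B + 2 * y - 1 / 2) (2 * τ) * jacobiTheta₂ (-(1 / 2)) (2 * τ) := by
  have h := theta_product_formula hτ (B - 1 / 2 + y) (B + y)
  have e1 : (B - 1 / 2 + y) + (B + y) = 2 * B + 2 * y - 1 / 2 := by ring
  have e2 : (B - 1 / 2 + y) - (B + y) = -(1 / 2) := by ring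
  have e3 : -(1 / 2 : ℂ) + τ = τ - 1 / 2 := by ring
  rw [e1, e2, e3, theta_vanish hτ, mul_zero, mul_zero, add_zero] at h
  exact h

/-- The 'Moreover' part of Lemma 4.3: the product identity allowing to rewrite the
quotient of theta functions `δ(z)` as a single quotient with doubled period `2τ`. -/
theorem theta_quotient_doubled_period (τ : ℂ) (hτ : 0 < τ.im) (A x : ℂ) :
    (jacobiTheta₂ (A - 1 / 2 + x) τ * jacobiTheta₂ (A + x) τ *
        jacobiTheta₂ (2 * A - 1 / 2) (2 * τ) =
      jacobiTheta₂ (A - 1 / 2) τ * jacobiTheta₂ A τ *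
        jacobiTheta₂ (2 * A + 2 * x - 1 / 2) (2 * τ)) ∧
    (jacobiTheta₂ (A - 1 / 2) τ * jacobiTheta₂ A τ ≠ 0 →
      jacobiTheta₂ (2 * A - 1 / 2) (2 * τ) ≠ 0 →
      (jacobiTheta₂ (A - 1 / 2 + x) τ * jacobiTheta₂ (A + x) τ) /
          (jacobiTheta₂ (A - 1 / 2) τ * jacobiTheta₂ A τ) =
        jacobiTheta₂ (2 * A - 1 / 2 + 2 * x) (2 * τ) /
          jacobiTheta₂ (2 * A - 1 / 2) (2 * τ)) := by
  have hx := theta_half_product hτ A x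
  have h0 := theta_half_product hτ A 0
  have e0 : A - 1 / 2 + (0 : ℂ) = A - 1 / 2 := by ring
  have e0' : A + (0 : ℂ) = A := by ring
  have e0'' : 2 * A + 2 * (0 : ℂ) - 1 / 2 = 2 * A - 1 / 2 := by ring
  rw [e0, e0', e0''] at h0
  constructor
  · rw [hx, h0]
    ring
  · intro h1 _
    rw [h0] at h1
    have hθh : jacobiTheta₂ (-(1 / 2) : ℂ) (2 * τ) ≠ 0 := fun h => h1 (by rw [h, mul_zero])
    have hθA : jacobiTheta₂ (2 * A - 1 / 2) (2 * τ) ≠ 0 := fun h => h1 (by rw [h, zero_mul])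
    rw [hx, h0]
    rw [show (2 * A - 1 / 2 + 2 * x) = 2 * A + 2 * x - 1 / 2 from by ring]
    rw [mul_div_mul_right _ _ hθh]
end

section
/- Let q ∈ (−1, 0) be real, so q⁻¹ < q < 0, and let f : ℝ → ℂ be continuous on the interval [q⁻¹, q] and satisfy f(s) = f(1/s) for every s ∈ [q⁻¹, q]. Let z ∈ ℂ with z ≠ 0 and such that neither z nor z⁻¹ equals any real number in [q⁻¹, q]. Then ∫_{q⁻¹}^{q} Ω(z⁻¹, s)·f(s) ds = − ∫_{q⁻¹}^{q} Ω(z, s)·f(s) ds. Consequently the Cauchy-type integral p(z) = (1/(2πi)) ∫_{q⁻¹}^{q} Ω(z,s) f(s) ds satisfies the odd symmetry p(z⁻¹) = −p(z) of equation (pi2). -/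
open Complex intervalIntegral

/-- Symmetry (pi2) of the Cauchy-type integral of equation (p(z)):
for `f` continuous on `[q⁻¹, q]` with `f(s) = f(1/s)`, the integral with kernel
`Ω(z,s) = (1/(2s))(s+z)/(s−z)` satisfies `p(z⁻¹) = −p(z)`. -/
theorem cauchy_integral_odd_symmetry (q : ℝ) (hq : q ∈ Set.Ioo (-1 : ℝ) 0) (f : ℝ → ℂ)
    (hf : ContinuousOn f (Set.Icc q⁻¹ q))
    (hsym : ∀ s ∈ Set.Icc q⁻¹ q, f s = f (1 / s))
    (z : ℂ) (hz : z ≠ 0)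
    (hzr : ∀ s ∈ Set.Icc q⁻¹ q, z ≠ (s : ℂ) ∧ z⁻¹ ≠ (s : ℂ)) :
    ((∫ s in q⁻¹..q, (1 / (2 * (s : ℂ))) * (((s : ℂ) + z⁻¹) / ((s : ℂ) - z⁻¹)) * f s)
        = -∫ s in q⁻¹..q, (1 / (2 * (s : ℂ))) * (((s : ℂ) + z) / ((s : ℂ) - z)) * f s) ∧
    ((1 / (2 * (Real.pi : ℂ) * Complex.I)) *
        ∫ s in q⁻¹..q, (1 / (2 * (s : ℂ))) * (((s : ℂ) + z⁻¹) / ((s : ℂ) - z⁻¹)) * f s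
      = -((1 / (2 * (Real.pi : ℂ) * Complex.I)) *
        ∫ s in q⁻¹..q, (1 / (2 * (s : ℂ))) * (((s : ℂ) + z) / ((s : ℂ) - z)) * f s)) := by
  obtain ⟨hq1, hq0⟩ := hq
  have hqinv : q⁻¹ < -1 := by
    have := (inv_lt_inv_of_neg hq0 (show (-1:ℝ) < 0 by norm_num)).mpr hq1
    norm_num at this
    exact this
  have hle : q⁻¹ ≤ q := by linarith
  have huIcc : Set.uIcc q⁻¹ q = Set.Icc q⁻¹ q := Set.uIcc_of_le hle
  have hneg : ∀ s ∈ Set.Icc q⁻¹ q, s < 0 := fun s hs => lt_of_le_of_lt hs.2 hq0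
  have hinvmem : ∀ s ∈ Set.Icc q⁻¹ q, s⁻¹ ∈ Set.Icc q⁻¹ q := by
    intro s hs
    have hs0 : s < 0 := hneg s hs
    refine ⟨(inv_le_inv_of_neg hq0 hs0).mpr hs.2, ?_⟩
    have := (inv_le_inv_of_neg hs0 (by linarith : q⁻¹ < 0)).mpr hs.1
    simpa using this
  set g : ℝ → ℂ := fun t => (1 / (2 * (t : ℂ))) * (((t : ℂ) + z⁻¹) / ((t : ℂ) - z⁻¹)) * f t
    with hg
  have hgcont : ContinuousOn g (Set.Icc q⁻¹ q) := by
    apply ContinuousOn.mul _ hf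
    apply ContinuousOn.mul
    · refine ContinuousOn.div continuousOn_const (by fun_prop) ?_
      intro s hs
      have : (s:ℂ) ≠ 0 := by exact_mod_cast (hneg s hs).ne
      simpa using this
    · refine ContinuousOn.div (by fun_prop) (by fun_prop) ?_
      intro s hs
      rw [sub_ne_zero]
      exact fun h => (hzr s hs).2 h.symm
  have key : (∫ s in q⁻¹..q, (1 / (2 * (s : ℂ))) * (((s : ℂ) + z) / ((s : ℂ) - z)) * f s)
      = - ∫ s in q⁻¹..q, g s := by
    have hsub : (∫ s in q⁻¹..q, (-(s^2)⁻¹ : ℝ) • (g ∘ (fun x : ℝ => x⁻¹)) s)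
        = ∫ t in (q⁻¹)⁻¹..q⁻¹, g t := by
      apply integral_comp_smul_deriv'
      · intro x hx
        rw [huIcc] at hx
        have hx0 : x ≠ 0 := (hneg x hx).ne
        simpa using (hasDerivAt_inv hx0)
      · rw [huIcc]
        refine ContinuousOn.neg (ContinuousOn.inv₀ (by fun_prop) ?_)
        intro x hx
        exact pow_ne_zero 2 (hneg x hx).ne
      · apply hgcont.mono
        rw [huIcc]
        rintro t ⟨s, hs, rfl⟩
        exact hinvmem s hs
    rw [inv_inv, intervalIntegral.integral_symm q⁻¹ q] at hsub
    rw [← hsub]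
    apply intervalIntegral.integral_congr
    intro s hs
    rw [huIcc] at hs
    have hs0 : (s:ℂ) ≠ 0 := by exact_mod_cast (hneg s hs).ne
    have hsz : (s:ℂ) - z ≠ 0 := by
      rw [sub_ne_zero]; exact fun h => (hzr s hs).1 h.symm
    have h2 : ((s:ℂ)⁻¹ - z⁻¹) ≠ 0 := by
      rw [sub_ne_zero]
      exact fun h => (hzr s hs).1 (inv_injective h.symm)
    have hfs : f (s⁻¹) = f s := by rw [hsym s hs, one_div]
    have hker : (1 / (2 * (s : ℂ))) * (((s:ℂ) + z) / ((s:ℂ) - z))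
        = (-((s:ℂ)^2)⁻¹) * ((1 / (2 * ((s:ℂ))⁻¹)) * ((((s:ℂ))⁻¹ + z⁻¹) / (((s:ℂ))⁻¹ - z⁻¹))) := by
      have hzs : z - (s:ℂ) ≠ 0 := sub_ne_zero.2 ((hzr s hs).1)
      have e3 : (((s:ℂ)+z)/((s:ℂ)*z)) / ((z-(s:ℂ))/((s:ℂ)*z)) = ((s:ℂ)+z)/(z-(s:ℂ)) := by
        rw [div_div_div_comm, div_self (mul_ne_zero hs0 hz), div_one]
      rw [inv_sub_inv hs0 hz, inv_add_inv hs0 hz, e3]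
      field_simp
      ring
    simp only [Function.comp, g]
    rw [Complex.real_smul]
    push_cast
    rw [hfs, hker]
    ring
  constructor
  · rw [key]; simp
  · rw [key]; simp [mul_neg]
end

section
/- Let q, y ∈ (−1, 0) be real and c ∈ ℝ. For every θ ∈ ℝ, the complex number g_circ(θ) := (1/2) ∫_0^θ (e^{it} + e^{−it} + c) · ( ((e^{it}−y)(e^{it}−1/y))/((e^{it}−q)(e^{it}−1/q)) )^{1/2} · i dt, where (·)^{1/2} is the principal complex square root, has zero real part: Re g_circ(θ) = 0. -/
open Complex intervalIntegral

lemma exp_add_exp_neg (t : ℝ) :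
    Complex.exp (Complex.I * t) + Complex.exp (-(Complex.I * t)) = 2 * (Real.cos t : ℂ) := by
  rw [show Complex.I * (t:ℂ) = (t:ℂ) * Complex.I by ring,
    show -((t:ℂ) * Complex.I) = (-t:ℂ) * Complex.I by push_cast; ring,
    Complex.exp_mul_I, Complex.exp_mul_I]
  simp [Complex.cos_neg, Complex.sin_neg]
  ring

lemma quad_factor (a : ℝ) (ha : a ≠ 0) (t : ℝ) :
    (Complex.exp (Complex.I * t) - (a : ℂ)) * (Complex.exp (Complex.I * t) - 1 / (a : ℂ)) =
      Complex.exp (Complex.I * t) * ((2 * Real.cos t - (a + 1 / a) : ℝ) : ℂ) := by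
  have hz : Complex.exp (Complex.I * t) ≠ 0 := Complex.exp_ne_zero _
  have hinv : Complex.exp (-(Complex.I * t)) = (Complex.exp (Complex.I * t))⁻¹ :=
    Complex.exp_neg _
  have hcos : (2 * (Real.cos t : ℂ)) =
      Complex.exp (Complex.I * t) + (Complex.exp (Complex.I * t))⁻¹ := by
    rw [← hinv, exp_add_exp_neg]
  have ha' : (a : ℂ) ≠ 0 := Complex.ofReal_ne_zero.mpr ha
  push_cast at hcos ⊢
  rw [hcos]
  field_simp
  ring

lemma lt_neg_two (a : ℝ) (ha : a ∈ Set.Ioo (-1 : ℝ) 0) : a + 1 / a < -2 := by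
  obtain ⟨h1, h0⟩ := ha
  have ha1 : 0 < a + 1 := by linarith
  have hp : 0 < (a + 1) ^ 2 := pow_pos ha1 2
  have hdiv : (a + 1) ^ 2 / a < 0 := div_neg_of_pos_of_neg hp h0
  have ha0 : a ≠ 0 := ne_of_lt h0
  have heq : a + 1 / a + 2 = (a + 1) ^ 2 / a := by
    field_simp
    ring
  linarith [heq ▸ hdiv]

/-- Unit-circle part of Lemma 3.1(b): the g-function of equation (g), evaluated along
the unit circle `z = e^{iθ}`, has vanishing real part. -/
theorem g_circ_real_part_zero (q y : ℝ) (hq : q ∈ Set.Ioo (-1 : ℝ) 0)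
    (hy : y ∈ Set.Ioo (-1 : ℝ) 0) (c : ℝ) (θ : ℝ) :
    (((1 : ℂ) / 2) * ∫ t in (0 : ℝ)..θ,
      (Complex.exp (Complex.I * t) + Complex.exp (-(Complex.I * t)) + (c : ℂ)) *
        (((Complex.exp (Complex.I * t) - (y : ℂ)) * (Complex.exp (Complex.I * t) - 1 / (y : ℂ))) /
          ((Complex.exp (Complex.I * t) - (q : ℂ)) * (Complex.exp (Complex.I * t) - 1 / (q : ℂ))))
            ^ ((1 : ℂ) / 2) *
        Complex.I).re = 0 := by
  have hyne : y ≠ 0 := ne_of_lt hy.2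
  have hqne : q ≠ 0 := ne_of_lt hq.2
  have hy2 := lt_neg_two y hy
  have hq2 := lt_neg_two q hq
  set u : ℝ → ℝ := fun t =>
    (2 * Real.cos t + c) *
      ((2 * Real.cos t - (y + 1 / y)) / (2 * Real.cos t - (q + 1 / q))) ^ ((1 : ℝ) / 2) with hu
  have hpt : ∀ t : ℝ,
      (Complex.exp (Complex.I * t) + Complex.exp (-(Complex.I * t)) + (c : ℂ)) *
        (((Complex.exp (Complex.I * t) - (y : ℂ)) * (Complex.exp (Complex.I * t) - 1 / (y : ℂ))) /
          ((Complex.exp (Complex.I * t) - (q : ℂ)) * (Complex.exp (Complex.I * t) - 1 / (q : ℂ))))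
            ^ ((1 : ℂ) / 2) *
        Complex.I = ((u t : ℝ) : ℂ) * Complex.I := by
    intro t
    have hAy : (0:ℝ) < 2 * Real.cos t - (y + 1 / y) := by
      have := Real.neg_one_le_cos t; linarith
    have hAq : (0:ℝ) < 2 * Real.cos t - (q + 1 / q) := by
      have := Real.neg_one_le_cos t; linarith
    have hfac1 : Complex.exp (Complex.I * t) + Complex.exp (-(Complex.I * t)) + (c : ℂ) =
        ((2 * Real.cos t + c : ℝ) : ℂ) := by
      rw [exp_add_exp_neg]; push_cast; ring
    have hz : Complex.exp (Complex.I * t) ≠ 0 := Complex.exp_ne_zero _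
    have hQ : ((Complex.exp (Complex.I * t) - (y : ℂ)) * (Complex.exp (Complex.I * t) - 1 / (y : ℂ))) /
          ((Complex.exp (Complex.I * t) - (q : ℂ)) * (Complex.exp (Complex.I * t) - 1 / (q : ℂ))) =
        (((2 * Real.cos t - (y + 1 / y)) / (2 * Real.cos t - (q + 1 / q)) : ℝ) : ℂ) := by
      rw [quad_factor y hyne t, quad_factor q hqne t,
        mul_div_mul_left _ _ hz, Complex.ofReal_div]
    have hpow : (((2 * Real.cos t - (y + 1 / y)) / (2 * Real.cos t - (q + 1 / q)) : ℝ) : ℂ)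
          ^ ((1 : ℂ) / 2) =
        ((((2 * Real.cos t - (y + 1 / y)) / (2 * Real.cos t - (q + 1 / q))) ^ ((1:ℝ)/2) : ℝ) : ℂ) := by
      rw [Complex.ofReal_cpow (le_of_lt (div_pos hAy hAq)) ((1:ℝ)/2)]
      norm_num
    rw [hfac1, hQ, hpow, hu]
    push_cast
    ring
  rw [intervalIntegral.integral_congr (fun t _ => hpt t),
    intervalIntegral.integral_mul_const, intervalIntegral.integral_ofReal]
  simp
end

section
/- Let h : ℂ → ℂ be differentiable on ℂ ∖ {−1}, satisfy the inversion symmetry h(1/z) = h(z) for all z with z ≠ 0 and z ≠ −1, be bounded at infinity (there is C with |h(z)| ≤ C whenever |z| ≥ 2), and have at most a simple pole at −1 (there is C′ with |(z+1)·h(z)| ≤ C′ whenever 0 < |z+1| ≤ 1/2). Then h is constant on ℂ ∖ {−1}. -/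
/-! Multiplying by `z + 1` turns the pole of `h` into a removable singularity of
`F z = (z + 1) h z`, whose limit `L` at `-1` is the residue. The symmetry gives
`F z⁻¹ = z⁻¹ F z`, and letting `z → -1` yields `L = -L`, so `L = 0` and `h` itself extends
holomorphically across `-1`. The extension is bounded (on `‖z‖ ≤ 2` by compactness, outside by
hypothesis), hence constant by Liouville. -/

open Complex Filter Topology Asymptotics Bornology Set Function

theorem tendsto_inv₀_nhdsNE {G₀ : Type*} [GroupWithZero G₀] [TopologicalSpace G₀] [ContinuousInv₀ G₀]
    {a : G₀} (ha : a ≠ 0) : Tendsto Inv.inv (𝓝[≠] a) (𝓝[≠] a⁻¹) :=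
  tendsto_nhdsWithin_of_tendsto_nhds_of_eventually_within _
    ((continuousAt_inv₀ ha).tendsto.mono_left nhdsWithin_le_nhds)
    (eventually_nhdsWithin_of_forall fun _ hz => inv_injective.ne hz)

theorem Continuous.isBounded_range_of_norm_le {E F : Type*} [NormedAddCommGroup E] [ProperSpace E]
    [SeminormedAddCommGroup F] {f : E → F} (hf : Continuous f) {R C : ℝ}
    (hC : ∀ x, R ≤ ‖x‖ → ‖f x‖ ≤ C) : IsBounded (range f) := by
  refine (((isCompact_closedBall 0 R).image hf).isBounded.union
    (Metric.isBounded_closedBall (x := 0) (r := C))).subset ?_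
  rintro _ ⟨x, rfl⟩
  rcases le_or_gt ‖x‖ R with hx | hx
  · exact .inl (mem_image_of_mem f (mem_closedBall_zero_iff.2 hx))
  · exact .inr (mem_closedBall_zero_iff.2 (hC x hx.le))

variable {E : Type*} [NormedAddCommGroup E] [NormedSpace ℂ E] {f : ℂ → E} {c : ℂ}

theorem tendsto_sub_smul_limUnder_of_isBoundedUnder [CompleteSpace E]
    (hd : ∀ᶠ z in 𝓝[≠] c, DifferentiableAt ℂ f z)
    (hb : IsBoundedUnder (· ≤ ·) (𝓝[≠] c) fun z => ‖(z - c) • f z‖) :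
    Tendsto (fun z => (z - c) • f z) (𝓝[≠] c)
      (𝓝 (limUnder (𝓝[≠] c) fun z => (z - c) • f z)) :=
  tendsto_limUnder_of_differentiable_on_punctured_nhds_of_bounded_under
    (hd.mono fun _ hz => ((differentiableAt_id.sub_const c).smul hz)) (by simpa using hb)

theorem differentiable_update_limUnder_of_tendsto_sub_smul [CompleteSpace E]
    (hd : DifferentiableOn ℂ f {c}ᶜ)
    (hres : Tendsto (fun z => (z - c) • f z) (𝓝[≠] c) (𝓝 0)) :
    Differentiable ℂ (update f c (limUnder (𝓝[≠] c) f)) := by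
  have hconst : Tendsto (fun z => (z - c) • f c) (𝓝[≠] c) (𝓝 0) := by
    have hcont : Continuous fun z : ℂ => (z - c) • f c := by fun_prop
    simpa using (hcont.tendsto c).mono_left nhdsWithin_le_nhds
  have hsmul : (fun z => (z - c) • (f z - f c)) =o[𝓝[≠] c] fun _ => (1 : ℂ) := by
    simpa [smul_sub] using (isLittleO_one_iff ℂ).2 (by simpa only [sub_zero] using hres.sub hconst)
  have ho : (fun z => f z - f c) =o[𝓝[≠] c] fun z => (z - c)⁻¹ := by
    refine ((isBigO_refl (fun z => (z - c)⁻¹) _).smul_isLittleO hsmul).congr' ?_ (by simp)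
    filter_upwards [self_mem_nhdsWithin] with z hz
    rw [smul_smul, inv_mul_cancel₀ (sub_ne_zero.2 hz), one_smul]
  rw [← differentiableOn_univ]
  exact differentiableOn_update_limUnder_of_isLittleO univ_mem
    (by rwa [← compl_eq_univ_sdiff]) ho

theorem eq_zero_of_tendsto_add_one_smul_of_apply_inv_eq {L : E}
    (hL : Tendsto (fun z => (z + 1) • f z) (𝓝[≠] (-1)) (𝓝 L))
    (hsym : ∀ᶠ z in 𝓝[≠] (-1), f z⁻¹ = f z) : L = 0 := by
  have hne : (-1 : ℂ) ≠ 0 := neg_ne_zero.2 one_ne_zero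
  have hinv : Tendsto (fun z => (z⁻¹ + 1) • f z⁻¹) (𝓝[≠] (-1)) (𝓝 L) := by
    have := tendsto_inv₀_nhdsNE hne
    rw [inv_neg_one] at this
    exact hL.comp this
  have hneg : Tendsto (fun z => (z⁻¹ + 1) • f z⁻¹) (𝓝[≠] (-1)) (𝓝 ((-1 : ℂ)⁻¹ • L)) := by
    refine (((tendsto_inv₀ hne).mono_left nhdsWithin_le_nhds).smul hL).congr' ?_
    filter_upwards [hsym, nhdsWithin_le_nhds (isOpen_compl_singleton.mem_nhds hne)]
      with z hfz hz
    rw [hfz, smul_smul, mul_add, inv_mul_cancel₀ hz, mul_one, add_comm]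
  have hself : L = -L := by simpa using tendsto_nhds_unique hinv hneg
  rwa [eq_neg_iff_add_eq_zero, ← two_smul ℂ, smul_eq_zero, or_iff_right two_ne_zero] at hself

/-- Liouville-type argument concluding the proof of Lemma 5.2(iv): a function
holomorphic off `−1`, symmetric under `z ↦ 1/z`, bounded at infinity and with at most
a simple pole at `−1` is constant. -/
theorem liouville_with_inversion_symmetry (h : ℂ → ℂ)
    (hdiff : DifferentiableOn ℂ h {(-1 : ℂ)}ᶜ)
    (hsym : ∀ z : ℂ, z ≠ 0 → z ≠ -1 → h (1 / z) = h z)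
    (hbdd : ∃ C : ℝ, ∀ z : ℂ, 2 ≤ ‖z‖ → ‖h z‖ ≤ C)
    (hpole : ∃ C' : ℝ, ∀ z : ℂ, 0 < ‖z + 1‖ → ‖z + 1‖ ≤ 1 / 2 →
      ‖(z + 1) * h z‖ ≤ C') :
    ∃ c : ℂ, ∀ z : ℂ, z ≠ -1 → h z = c := by
  obtain ⟨C, hC⟩ := hbdd
  obtain ⟨C', hC'⟩ := hpole
  have hnear : ∀ᶠ z in 𝓝[≠] (-1 : ℂ), z ≠ -1 ∧ z ≠ 0 ∧ ‖z + 1‖ ≤ 1 / 2 := by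
    filter_upwards [self_mem_nhdsWithin, nhdsWithin_le_nhds (isOpen_compl_singleton.mem_nhds
      (by norm_num : (-1 : ℂ) ≠ 0)), nhdsWithin_le_nhds (Metric.closedBall_mem_nhds (-1 : ℂ)
      (by norm_num : (0 : ℝ) < 1 / 2))] with z hz hz0 hball
    exact ⟨hz, hz0, by simpa [dist_eq_norm] using hball⟩
  have hres_bdd : IsBoundedUnder (· ≤ ·) (𝓝[≠] (-1)) fun z => ‖(z - -1) • h z‖ :=
    isBoundedUnder_of_eventually_le <| hnear.mono fun z ⟨hz, _, hball⟩ => by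
      simpa using hC' z (norm_pos_iff.2 fun h0 => hz (eq_neg_of_add_eq_zero_left h0)) hball
  have hres := tendsto_sub_smul_limUnder_of_isBoundedUnder
    (eventually_nhdsWithin_of_forall fun z hz =>
      hdiff.differentiableAt (isOpen_compl_singleton.mem_nhds hz)) hres_bdd
  have hres_zero := eq_zero_of_tendsto_add_one_smul_of_apply_inv_eq
    (L := limUnder (𝓝[≠] (-1)) fun z => (z - -1) • h z) (by simpa only [sub_neg_eq_add] using hres)
    (hnear.mono fun z ⟨hz, hz0, _⟩ => by simpa using hsym z hz0 hz)
  have hH := differentiable_update_limUnder_of_tendsto_sub_smul hdiff (hres_zero ▸ hres)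
  obtain ⟨c, hc⟩ := hH.exists_const_forall_eq_of_bounded <|
    hH.continuous.isBounded_range_of_norm_le (R := 2) (C := C) fun z hz => by
      rw [update_of_ne (by rintro rfl; norm_num at hz)]
      exact hC z hz
  exact ⟨c, fun z hz => by simpa [update_of_ne hz] using hc z⟩
end

section
/- Let b, c ∈ ℂ, and let G : ℂ → ℂ satisfy G(λ) = −(1/λ)·(1 + b/λ + c/λ²) + E(λ), where E(λ) = O(λ⁻⁴) as |λ| → ∞ (along the cobounded filter on ℂ). Then, as z → 0 with z ≠ 0, ((z − z⁻¹)/2)·G((z + z⁻¹)/2) = 1 + 2bz + (4c − 2)z² + O(z³); i.e. the function z ↦ ((z − z⁻¹)/2)·G((z + z⁻¹)/2) − (1 + 2bz + (4c − 2)z²) is O(z³) along the punctured neighborhood filter of 0. -/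
open Complex Asymptotics Filter Topology

/-- Computational content of Lemma 2.1: under the Joukowsky substitution
`λ = (z + z⁻¹)/2`, the expansion (gerald1) of the Green's function turns into the
expansion (asympnew): `((z − z⁻¹)/2)·G((z + z⁻¹)/2) = 1 + 2bz + (4c − 2)z² + O(z³)`
as `z → 0`. -/
theorem green_function_joukowsky_expansion (b c : ℂ) (G E : ℂ → ℂ)
    (hG : ∀ l : ℂ, G l = -(1 / l) * (1 + b / l + c / l ^ 2) + E l)
    (hE : E =O[Bornology.cobounded ℂ] fun l : ℂ => (l⁻¹) ^ 4) :
    (fun z : ℂ => ((z - z⁻¹) / 2) * G ((z + z⁻¹) / 2)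
        - (1 + 2 * b * z + (4 * c - 2) * z ^ 2))
      =O[nhdsWithin 0 {(0 : ℂ)}ᶜ] fun z : ℂ => z ^ 3 := by
  set pl : Filter ℂ := nhdsWithin 0 {(0 : ℂ)}ᶜ with hpl
  set lam : ℂ → ℂ := fun z => (z + z⁻¹) / 2 with hlam
  -- basic eventual facts
  have hz0 : ∀ᶠ z : ℂ in pl, z ≠ 0 := eventually_mem_nhdsWithin
  have hsmall : ∀ᶠ z : ℂ in pl, ‖z‖ < 1/2 := by
    have : ∀ᶠ z : ℂ in nhds (0:ℂ), ‖z‖ < 1/2 := by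
      have := Metric.ball_mem_nhds (0:ℂ) (by norm_num : (0:ℝ) < 1/2)
      filter_upwards [this] with z hz
      simpa [Metric.mem_ball, dist_eq_norm] using hz
    exact nhdsWithin_le_nhds this
  have hne : ∀ᶠ z : ℂ in pl, (1 + z^2) ≠ 0 := by
    filter_upwards [hsmall] with z hz
    intro h
    have h2 : z^2 = -1 := by linear_combination h
    have : ‖z^2‖ = 1 := by rw [h2]; simp
    rw [norm_pow] at this
    nlinarith [norm_nonneg z]
  -- lam tends to cobounded
  have hnorm : Tendsto (fun z : ℂ => ‖z‖⁻¹) pl atTop := by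
    apply Filter.Tendsto.inv_tendsto_nhdsGT_zero
    rw [tendsto_nhdsWithin_iff]
    constructor
    · exact tendsto_norm_zero.mono_left nhdsWithin_le_nhds
    · filter_upwards [hz0] with z hz
      simpa using norm_pos_iff.2 hz
  have hlamT : Tendsto lam pl (Bornology.cobounded ℂ) := by
    rw [← tendsto_norm_atTop_iff_cobounded]
    apply tendsto_atTop_mono' pl
      (f₁ := fun z : ℂ => ‖z‖⁻¹/2 - 1/4)
    · filter_upwards [hsmall, hz0] with z hz hz0'
      have h1 : ‖z⁻¹‖/2 - ‖z‖/2 ≤ ‖lam z‖ := by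
        have hth := norm_sub_norm_le (z⁻¹) (-z)
        simp only [norm_neg, sub_neg_eq_add] at hth
        have : ‖lam z‖ = ‖z⁻¹ + z‖ / 2 := by
          simp only [hlam]
          rw [norm_div]
          norm_num [add_comm]
        rw [this]
        linarith
      rw [norm_inv] at h1
      linarith
    · apply tendsto_atTop_add_const_right
      exact hnorm.atTop_div_const (by norm_num)
  -- E part
  have hEcomp : (fun z => E (lam z)) =O[pl] fun z => (lam z)⁻¹ ^ 4 :=
    hE.comp_tendsto hlamT
  have hlaminv : (fun z => (lam z)⁻¹) =O[pl] fun z => z := by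
    have heq : ∀ᶠ z : ℂ in pl, (lam z)⁻¹ = z * (2 / (1 + z^2)) := by
      filter_upwards [hz0, hne] with z hz hnz
      have h : lam z = (1+z^2)/(2*z) := by simp only [hlam]; field_simp; ring
      rw [h, inv_div, ← mul_div_assoc, mul_comm z 2]
    have hcont : Tendsto (fun z : ℂ => 2 / (1 + z^2)) pl (𝓝 (2 / (1 + (0:ℂ)^2))) := by
      apply Tendsto.mono_left _ nhdsWithin_le_nhds
      apply ContinuousAt.tendsto
      fun_prop (disch := norm_num)
    calc (fun z => (lam z)⁻¹) =O[pl] fun z => z * (2 / (1 + z^2)) :=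
            (EventuallyEq.isBigO heq)
      _ =O[pl] fun z => z * 1 := (isBigO_refl _ _).mul (hcont.isBigO_one (F := ℂ))
      _ = fun z => z := by funext z; ring
  have hpre : (fun z : ℂ => (z - z⁻¹)/2) =O[pl] fun z => z⁻¹ := by
    have heq : ∀ᶠ z : ℂ in pl, (z - z⁻¹)/2 = z⁻¹ * ((z^2 - 1)/2) := by
      filter_upwards [hz0] with z hz; field_simp
    have hcont : Tendsto (fun z : ℂ => (z^2 - 1)/2) pl (𝓝 (((0:ℂ)^2 - 1)/2)) :=
      (Tendsto.mono_left (ContinuousAt.tendsto (by fun_prop)) nhdsWithin_le_nhds)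
    calc (fun z : ℂ => (z - z⁻¹)/2) =O[pl] fun z => z⁻¹ * ((z^2-1)/2) :=
            EventuallyEq.isBigO heq
      _ =O[pl] fun z => z⁻¹ * 1 := (isBigO_refl _ _).mul (hcont.isBigO_one (F := ℂ))
      _ = fun z => z⁻¹ := by funext z; ring
  have hEpart : (fun z : ℂ => ((z - z⁻¹)/2) * E (lam z)) =O[pl] fun z => z ^ 3 := by
    have h1 : (fun z : ℂ => ((z - z⁻¹)/2) * E (lam z)) =O[pl]
        fun z => z⁻¹ * z ^ 4 := hpre.mul (hEcomp.trans (hlaminv.pow 4))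
    apply h1.trans
    apply EventuallyEq.isBigO
    filter_upwards [hz0] with z hz
    field_simp
  -- main part
  set Fq : ℂ → ℂ := fun z =>
    (-6*b + (2-16*c)*z - 8*b*z^2 + (4-12*c)*z^3 - 2*b*z^4 + (2-4*c)*z^5) / (1 + z^2)^3 with hFq
  have hFO : Fq =O[pl] fun _ => (1:ℂ) := by
    apply Tendsto.isBigO_one (F := ℂ) (c := Fq 0)
    apply Tendsto.mono_left _ nhdsWithin_le_nhds
    apply ContinuousAt.tendsto
    apply ContinuousAt.div (by fun_prop) (by fun_prop)
    norm_num
  have hmain : (fun z : ℂ => ((z - z⁻¹)/2) * (-(1 / lam z) * (1 + b / lam z + c / (lam z)^2))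
      - (1 + 2 * b * z + (4 * c - 2) * z ^ 2)) =O[pl] fun z => z ^ 3 := by
    have heq : ∀ᶠ z : ℂ in pl,
        ((z - z⁻¹)/2) * (-(1 / lam z) * (1 + b / lam z + c / (lam z)^2))
          - (1 + 2 * b * z + (4 * c - 2) * z ^ 2) = z^3 * Fq z := by
      filter_upwards [hz0, hne] with z hz hnz
      have h2z : (2:ℂ)*z ≠ 0 := by simp [hz]
      have h : lam z = (1+z^2)/(2*z) := by simp only [hlam]; field_simp; ring
      have h2 : (z - z⁻¹)/2 = (z^2-1)/(2*z) := by field_simp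
      rw [h, h2, one_div_div, div_pow, div_div_eq_mul_div, div_div_eq_mul_div]
      have hcancel : (z^2-1)/(2*z) * (-((2*z)/(1+z^2)) *
          (1 + b*(2*z)/(1+z^2) + c*(2*z)^2/(1+z^2)^2))
          = ((1-z^2) * ((1+z^2)^2 + 2*b*z*(1+z^2) + 4*c*z^2)) / (1+z^2)^3 := by
        rw [← mul_assoc, ← neg_div, div_mul_div_comm]
        rw [show (z^2-1) * -(2*z) = (2*z) * (1-z^2) by ring,
            show (2*z)*(1+z^2) = (2*z)*(1+z^2) from rfl,
            mul_div_mul_left _ _ h2z]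
        field_simp [hnz]
        ring
      rw [hcancel, hFq]
      field_simp [hnz]
      ring
    calc _ =O[pl] fun z => z^3 * Fq z := EventuallyEq.isBigO heq
      _ =O[pl] fun z => z^3 * 1 := (isBigO_refl _ _).mul hFO
      _ = fun z => z^3 := by funext z; ring
  -- combine
  have hfinal : ∀ᶠ z : ℂ in pl,
      ((z - z⁻¹) / 2) * G ((z + z⁻¹) / 2) - (1 + 2 * b * z + (4 * c - 2) * z ^ 2)
      = (((z - z⁻¹)/2) * (-(1 / lam z) * (1 + b / lam z + c / (lam z)^2))
          - (1 + 2 * b * z + (4 * c - 2) * z ^ 2)) + ((z - z⁻¹)/2) * E (lam z) := by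
    filter_upwards with z
    rw [hG]
    simp only [hlam]
    ring
  exact (EventuallyEq.isBigO hfinal).trans (hmain.add hEpart)
end
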